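/- Let x₁,…,xₙ ∈ ℝᵈ and let K ⊆ ℝᵈ denote their convex hull. For any β > 0 and any positive constants c₁,…,cₙ > 0, the map F : ℝᵈ → ℝᵈ defined by F(ψ) = (Σᵢ xᵢ·(1/cᵢ)·exp(−‖xᵢ − ψ‖²/(2β))) / (Σᵢ (1/cᵢ)·exp(−‖xᵢ − ψ‖²/(2β))) maps ℝᵈ into K and is continuous; hence by Brouwer's fixed-point theorem F has a fixed point in K. -/

import Mathlib

/-!
`F ψ` is the centre of mass of the data points `xᵢ` with the positive weights
`wᵢ(ψ) = exp(-‖xᵢ - ψ‖² / 2β) / cᵢ`, so it lies in their convex hull and depends continuously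
on `ψ`. Brouwer is not needed for the fixed point: the kernel sum `g = ∑ᵢ wᵢ` has gradient
`β⁻¹ ∑ᵢ wᵢ(ψ) (xᵢ - ψ) = β⁻¹ g(ψ) (F ψ - ψ)` (mean shift), and `g` is continuous, positive and
vanishes at infinity, so it attains a maximum, where the gradient vanishes and `F ψ = ψ`.
-/

open Finset Filter Topology

lemma Finset.centerMass_eq_of_sum_smul_sub_eq_zero {R ι E : Type*} [Field R] [AddCommGroup E]
    [Module R E] {t : Finset ι} {w : ι → R} {z : ι → E} {p : E} (hw : ∑ i ∈ t, w i ≠ 0)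
    (h : ∑ i ∈ t, w i • (z i - p) = 0) : t.centerMass w z = p := by
  simp only [smul_sub, Finset.sum_sub_distrib, ← Finset.sum_smul, sub_eq_zero] at h
  rw [Finset.centerMass, h, smul_smul, inv_mul_cancel₀ hw, one_smul]

section GaussianKernel

variable {ι E : Type*} [NormedAddCommGroup E] (a : ι → ℝ) (x : ι → E) (β : ℝ)

noncomputable def gaussianKernelWeight (ψ : E) (i : ι) : ℝ :=
  a i * Real.exp (-‖x i - ψ‖ ^ 2 / (2 * β))

noncomputable def gaussianKernelSum [Fintype ι] (ψ : E) : ℝ :=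
  ∑ i, gaussianKernelWeight a x β ψ i

variable {a x β}

lemma gaussianKernelWeight_pos (ha : ∀ i, 0 < a i) (ψ : E) (i : ι) :
    0 < gaussianKernelWeight a x β ψ i :=
  mul_pos (ha i) (Real.exp_pos _)

lemma gaussianKernelSum_pos [Fintype ι] [Nonempty ι] (ha : ∀ i, 0 < a i) (ψ : E) :
    0 < gaussianKernelSum a x β ψ :=
  Finset.sum_pos (fun i _ ↦ gaussianKernelWeight_pos ha ψ i) Finset.univ_nonempty

@[fun_prop]
lemma continuous_gaussianKernelWeight (i : ι) :
    Continuous fun ψ : E ↦ gaussianKernelWeight a x β ψ i := by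
  unfold gaussianKernelWeight
  fun_prop

lemma continuous_gaussianKernelSum [Fintype ι] :
    Continuous (gaussianKernelSum a x β : E → ℝ) := by
  unfold gaussianKernelSum
  fun_prop

lemma continuous_centerMass_gaussianKernelWeight [Fintype ι] [Nonempty ι] [Module ℝ E]
    [ContinuousSMul ℝ E] (ha : ∀ i, 0 < a i) :
    Continuous fun ψ : E ↦ univ.centerMass (gaussianKernelWeight a x β ψ) x :=
  (continuous_gaussianKernelSum.inv₀ fun ψ ↦ (gaussianKernelSum_pos ha ψ).ne').smul
    (by fun_prop)

lemma tendsto_gaussianKernelWeight_cocompact [ProperSpace E] (hβ : 0 < β) (i : ι) :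
    Tendsto (fun ψ : E ↦ gaussianKernelWeight a x β ψ i) (cocompact E) (𝓝 0) := by
  have hdist : Tendsto (fun ψ : E ↦ ‖x i - ψ‖) (cocompact E) atTop :=
    (tendsto_dist_left_cocompact_atTop (x i)).congr fun ψ ↦ dist_eq_norm _ _
  have hexponent : Tendsto (fun ψ : E ↦ -‖x i - ψ‖ ^ 2 / (2 * β)) (cocompact E) atBot := by
    simp_rw [neg_div]
    exact tendsto_neg_atTop_atBot.comp
      (((tendsto_pow_atTop two_ne_zero).comp hdist).atTop_div_const (by positivity))
  simpa [gaussianKernelWeight] using (Real.tendsto_exp_atBot.comp hexponent).const_mul (a i)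

lemma exists_forall_gaussianKernelSum_le [Fintype ι] [Nonempty ι] [ProperSpace E]
    (ha : ∀ i, 0 < a i) (hβ : 0 < β) :
    ∃ ψ : E, ∀ φ, gaussianKernelSum a x β φ ≤ gaussianKernelSum a x β ψ := by
  obtain ⟨i⟩ := ‹Nonempty ι›
  have hvanish := tendsto_finsetSum univ fun j _ ↦
    tendsto_gaussianKernelWeight_cocompact (a := a) (x := x) hβ j
  rw [sum_const_zero] at hvanish
  refine continuous_gaussianKernelSum.exists_forall_ge' (x i) ?_
  filter_upwards [hvanish.eventually_lt_const (gaussianKernelSum_pos ha (x i))] with ψ hψ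
  exact hψ.le

variable [InnerProductSpace ℝ E]

lemma hasFDerivAt_gaussianKernelWeight (ψ : E) (i : ι) :
    HasFDerivAt (fun φ ↦ gaussianKernelWeight a x β φ i)
      ((gaussianKernelWeight a x β ψ i / β) • innerSL ℝ (x i - ψ)) ψ := by
  have hsq := ((hasFDerivAt_id ψ).const_sub (x i)).norm_sq
  have hexp : HasDerivAt (fun s ↦ a i * Real.exp (-s / (2 * β)))
      (a i * (Real.exp (-‖x i - ψ‖ ^ 2 / (2 * β)) * (-1 / (2 * β)))) (‖x i - ψ‖ ^ 2) :=
    (((hasDerivAt_id _).neg.div_const _).exp).const_mul _ |>.congr_deriv (by simp [neg_div])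
  refine (hexp.comp_hasFDerivAt ψ hsq).congr_fderiv ?_
  ext v
  simp only [id_eq, map_sub, ContinuousLinearMap.comp_neg, ContinuousLinearMap.comp_id, neg_sub,
    smul_apply, sub_apply, coe_innerSL_apply, nsmul_eq_mul,
    Nat.cast_ofNat, smul_eq_mul, gaussianKernelWeight]
  ring

lemma hasFDerivAt_gaussianKernelSum [Fintype ι] (ψ : E) :
    HasFDerivAt (gaussianKernelSum a x β)
      (β⁻¹ • innerSL ℝ (∑ i, gaussianKernelWeight a x β ψ i • (x i - ψ))) ψ := by
  refine (HasFDerivAt.fun_sum (u := univ) fun i _ ↦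
    hasFDerivAt_gaussianKernelWeight (a := a) (x := x) (β := β) ψ i).congr_fderiv ?_
  ext v
  simp [Finset.mul_sum, div_eq_inv_mul, mul_assoc]

lemma centerMass_gaussianKernelWeight_eq_of_isLocalMax [Fintype ι] [Nonempty ι]
    (ha : ∀ i, 0 < a i) (hβ : β ≠ 0) {ψ : E} (hψ : IsLocalMax (gaussianKernelSum a x β) ψ) :
    univ.centerMass (gaussianKernelWeight a x β ψ) x = ψ := by
  refine Finset.centerMass_eq_of_sum_smul_sub_eq_zero (gaussianKernelSum_pos ha ψ).ne' ?_
  have h := hψ.hasFDerivAt_eq_zero (hasFDerivAt_gaussianKernelSum ψ)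
  rw [smul_eq_zero, or_iff_right (inv_ne_zero hβ)] at h
  exact innerSL_inj.mp (h.trans (map_zero _).symm)

end GaussianKernel

/-- **β-VAE reconstruction map has a fixed point in the convex hull of the data.**
The normalized-Gaussian-weighted mean map `F` sends `ℝᵈ` into the convex hull `K` of
the data points, is continuous, and (by Brouwer's fixed-point theorem) has a fixed
point in `K`. -/
theorem reconstruction_map_fixed_point
    (d n : ℕ) (hn : 0 < n) (x : Fin n → EuclideanSpace ℝ (Fin d))
    (β : ℝ) (hβ : 0 < β) (c : Fin n → ℝ) (hc : ∀ i, 0 < c i)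
    (F : EuclideanSpace ℝ (Fin d) → EuclideanSpace ℝ (Fin d))
    (hF : ∀ ψ, F ψ =
      (∑ i, (1 / c i) * Real.exp (-‖x i - ψ‖ ^ 2 / (2 * β)))⁻¹ •
        ∑ i, ((1 / c i) * Real.exp (-‖x i - ψ‖ ^ 2 / (2 * β))) • x i) :
    (∀ ψ, F ψ ∈ convexHull ℝ (Set.range x)) ∧ Continuous F ∧
      ∃ ψ ∈ convexHull ℝ (Set.range x), F ψ = ψ := by
  have : Nonempty (Fin n) := ⟨⟨0, hn⟩⟩
  have ha : ∀ i, 0 < 1 / c i := fun i ↦ one_div_pos.mpr (hc i)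
  have hF' : F = fun ψ ↦ univ.centerMass (gaussianKernelWeight (fun i ↦ 1 / c i) x β ψ) x :=
    funext hF
  have hmem (ψ) : F ψ ∈ convexHull ℝ (Set.range x) := by
    rw [hF']
    exact univ.centerMass_mem_convexHull (fun i _ ↦ (gaussianKernelWeight_pos ha ψ i).le)
      (gaussianKernelSum_pos ha ψ) fun i _ ↦ Set.mem_range_self i
  obtain ⟨ψ, hψ⟩ := exists_forall_gaussianKernelSum_le (x := x) ha hβ
  have hfix : F ψ = ψ := by
    rw [hF']
    exact centerMass_gaussianKernelWeight_eq_of_isLocalMax ha hβ.ne' (.of_forall hψ)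
  exact ⟨hmem, hF' ▸ continuous_centerMass_gaussianKernelWeight ha, ψ, hfix ▸ hmem ψ, hfix⟩
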